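/- In subStraTT, closed derivations are displaceable: if Δ; ∅ ⊢ a :^k A under the empty context, then Δ; ∅ ⊢ a^{+i} :^{i+k} A^{+i}, where b^{+i} uniformly increments every level annotation in b by i (in particular (Πx:^j A. B)^{+i} = Πx:^{i+j} A^{+i}. B^{+i} and (x^j)^{+i} = x^{i+j}). -/
import Mathlib


/-! Syntax of subStraTT: a single universe ⋆, variables, displaced constants,
stratified dependent function types, abstractions, applications, the empty type
and its eliminator. Levels are natural numbers. -/

inductive Tm : Type
  | star
  | var (x : ℕ)
  | const (x : ℕ) (i : ℕ)
  | pi (j : ℕ) (x : ℕ) (A B : Tm)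
  | lam (x : ℕ) (b : Tm)
  | app (b a : Tm)
  | bot
  | absurd (b : Tm)
  deriving DecidableEq

namespace Tm

/-- Substitution `a{u/x}` of the term `u` for the variable `x`. -/
def subst (x : ℕ) (u : Tm) : Tm → Tm
  | star => star
  | var y => if y = x then u else var y
  | const y i => const y i
  | pi j y A B => pi j y (subst x u A) (if y = x then B else subst x u B)
  | lam y b => lam y (if y = x then b else subst x u b)
  | app b a => app (subst x u b) (subst x u a)
  | bot => bot
  | absurd b => absurd (subst x u b)

/-- Displacement `a^{+i}`: uniformly increment every level annotation by `i`. -/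
def incr (i : ℕ) : Tm → Tm
  | star => star
  | var y => var y
  | const y j => const y (i + j)
  | pi j y A B => pi (i + j) y (incr i A) (incr i B)
  | lam y b => lam y (incr i b)
  | app b a => app (incr i b) (incr i a)
  | bot => bot
  | absurd b => absurd (incr i b)

end Tm

/-- A signature entry `x :^k A := a` (name, level, type, definition). -/
abbrev Sig := List (ℕ × ℕ × Tm × Tm)
/-- A context entry `x :^k A` (name, level, type); head is the most recent. -/
abbrev Ctx := List (ℕ × ℕ × Tm)

def lookupSig : Sig → ℕ → Option (ℕ × Tm × Tm)
  | [], _ => none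
  | (y, k, A, a) :: Δ, x => if x = y then some (k, A, a) else lookupSig Δ x

def lookupCtx : Ctx → ℕ → Option (ℕ × Tm)
  | [], _ => none
  | (y, k, A) :: Γ, x => if x = y then some (k, A) else lookupCtx Γ x

/-- Untyped definitional equality `Δ ⊢ a ≡ b`. -/
inductive DEq (Δ : Sig) : Tm → Tm → Prop
  | refl (a) : DEq Δ a a
  | sym : DEq Δ a b → DEq Δ b a
  | trans : DEq Δ a b → DEq Δ b c → DEq Δ a c
  | beta (x b a) : DEq Δ (.app (.lam x b) a) (b.subst x a)
  | delta {x i k A a} : lookupSig Δ x = some (k, A, a) → DEq Δ (.const x i) (a.incr i)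
  | pi {j x A A' B B'} : DEq Δ A A' → DEq Δ B B' → DEq Δ (.pi j x A B) (.pi j x A' B')
  | lam {x b b'} : DEq Δ b b' → DEq Δ (.lam x b) (.lam x b')
  | app {b b' a a'} : DEq Δ b b' → DEq Δ a a' → DEq Δ (.app b a) (.app b' a')
  | absurd {b b'} : DEq Δ b b' → DEq Δ (.absurd b) (.absurd b')

mutual
  /-- Well-formed signatures `⊢ Δ`. -/
  inductive SigWf : Sig → Prop
    | nil : SigWf []
    | cons {Δ x k A a} : SigWf Δ → lookupSig Δ x = none →
        Typing Δ [] a k A → SigWf ((x, k, A, a) :: Δ)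

  /-- Well-formed contexts `Δ ⊢ Γ`. -/
  inductive CtxWf : Sig → Ctx → Prop
    | nil {Δ} : SigWf Δ → CtxWf Δ []
    | cons {Δ Γ x k A} : CtxWf Δ Γ → lookupCtx Γ x = none →
        Typing Δ Γ A k .star → CtxWf Δ ((x, k, A) :: Γ)

  /-- Level-annotated typing `Δ; Γ ⊢ a :^k A` of subStraTT. -/
  inductive Typing : Sig → Ctx → Tm → ℕ → Tm → Prop
    | star {Δ Γ k} : CtxWf Δ Γ → Typing Δ Γ .star k .star
    | var {Δ Γ x j k A} : CtxWf Δ Γ → lookupCtx Γ x = some (j, A) → j ≤ k →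
        Typing Δ Γ (.var x) k A
    | const {Δ Γ x i j k A a} : CtxWf Δ Γ → lookupSig Δ x = some (j, A, a) →
        i + j ≤ k → Typing Δ Γ (.const x i) k (A.incr i)
    | pi {Δ Γ j k x A B} : j < k → Typing Δ Γ A j .star →
        Typing Δ ((x, j, A) :: Γ) B k .star → Typing Δ Γ (.pi j x A B) k .star
    | lam {Δ Γ j k x A B b} : j < k → Typing Δ Γ A j .star →
        Typing Δ ((x, j, A) :: Γ) b k B → Typing Δ Γ (.lam x b) k (.pi j x A B)
    | app {Δ Γ j k x A B b a} : Typing Δ Γ b k (.pi j x A B) → Typing Δ Γ a j A →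
        Typing Δ Γ (.app b a) k (B.subst x a)
    | bot {Δ Γ k} : CtxWf Δ Γ → Typing Δ Γ .bot k .star
    | absurd {Δ Γ k b A} : Typing Δ Γ b k .bot → Typing Δ Γ A k .star →
        Typing Δ Γ (.absurd b) k A
    | conv {Δ Γ k a A B} : Typing Δ Γ a k A → DEq Δ A B →
        Typing Δ Γ B k .star → Typing Δ Γ a k B
end

namespace Tm

theorem incr_incr (i j : ℕ) (a : Tm) : (a.incr j).incr i = a.incr (i + j) := by
  induction a <;> simp [incr, *, Nat.add_assoc]

theorem incr_subst (i x : ℕ) (u a : Tm) :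
    (Tm.subst x u a).incr i = Tm.subst x (u.incr i) (a.incr i) := by
  induction a <;> simp [incr, subst, *] <;> split <;> simp [incr, subst, *]

end Tm

theorem DEq.incr {Δ : Sig} {a b : Tm} (h : DEq Δ a b) (i : ℕ) :
    DEq Δ (a.incr i) (b.incr i) := by
  induction h with
  | refl => exact .refl _
  | sym _ ih => exact ih.sym
  | trans _ _ ih1 ih2 => exact ih1.trans ih2
  | beta x b a =>
      show DEq _ _ ((Tm.subst x b a).incr i)
      rw [Tm.incr_subst]; exact .beta x (b.incr i) (a.incr i)
  | delta hx => rw [Tm.incr_incr]; exact .delta hx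
  | pi _ _ ih1 ih2 => exact .pi ih1 ih2
  | lam _ ih => exact .lam ih
  | app _ _ ih1 ih2 => exact .app ih1 ih2
  | absurd _ ih => exact .absurd ih

def incrCtx (i : ℕ) (Γ : Ctx) : Ctx :=
  Γ.map (fun e => (e.1, i + e.2.1, e.2.2.incr i))

theorem lookupCtx_incr (i : ℕ) (Γ : Ctx) (x : ℕ) :
    lookupCtx (Γ.map (fun e => (e.1, i + e.2.1, e.2.2.incr i))) x
      = (lookupCtx Γ x).map (fun p => (i + p.1, p.2.incr i)) := by
  induction Γ with
  | nil => rfl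
  | cons e Γ ih =>
      obtain ⟨y, k, A⟩ := e
      simp only [List.map_cons, lookupCtx]
      split
      · simp
      · exact ih

theorem displace_typing (i : ℕ) {Δ : Sig} {Γ : Ctx} {a A : Tm} {k : ℕ}
    (h : Typing Δ Γ a k A) :
    Typing Δ (incrCtx i Γ) (a.incr i) (i + k) (A.incr i) := by
  refine Typing.rec (motive_1 := fun _ _ => True)
    (motive_2 := fun Δ Γ _ => CtxWf Δ (incrCtx i Γ))
    (motive_3 := fun Δ Γ a k A _ =>
      Typing Δ (incrCtx i Γ) (a.incr i) (i + k) (A.incr i))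
    ?_ ?_ ?_ ?_ ?_ ?_ ?_ ?_ ?_ ?_ ?_ ?_ ?_ h
  · exact trivial
  · intros; exact trivial
  · intro Δ hΔ _
    exact .nil hΔ
  · intro Δ Γ x k A _ hlk _ ihΓ ihA
    exact .cons ihΓ (by simp [incrCtx, lookupCtx_incr, hlk]) ihA
  · intro Δ Γ k _ ih
    exact .star ih
  · intro Δ Γ x j k A _ hlk hjk ih
    exact Typing.var (j := i + j) ih (by simp [incrCtx, lookupCtx_incr, hlk]) (by omega)
  · intro Δ Γ x i' j k A a _ hlk hle ih
    show Typing _ _ (Tm.const x (i + i')) (i + k) ((A.incr i').incr i)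
    rw [Tm.incr_incr]
    exact .const ih hlk (by omega)
  · intro Δ Γ j k x A B hjk _ _ ihA ihB
    exact .pi (by omega) ihA ihB
  · intro Δ Γ j k x A B b hjk _ _ ihA ihb
    exact .lam (by omega) ihA ihb
  · intro Δ Γ j k x A B b a _ _ ihb iha
    show Typing _ _ _ _ ((Tm.subst x B a).incr i)
    rw [Tm.incr_subst]
    exact .app ihb iha
  · intro Δ Γ k _ ih
    exact .bot ih
  · intro Δ Γ k b A _ _ ihb ihA
    exact .absurd ihb ihA
  · intro Δ Γ k a A B _ hdeq _ iha ihB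
    exact .conv iha (hdeq.incr i) ihB

/-- **Displaceability (empty context)**: if `Δ; ∅ ⊢ a :^k A` then
`Δ; ∅ ⊢ a^{+i} :^{i+k} A^{+i}`. -/
theorem substratt_displaceability {Δ : Sig} {a A : Tm} {k : ℕ}
    (h : Typing Δ [] a k A) (i : ℕ) :
    Typing Δ [] (Tm.incr i a) (i + k) (Tm.incr i A) := by
  simpa [incrCtx] using displace_typing i h
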